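/- If T is a C-symmetric partial isometry on H, then there exists a C-symmetric unitary operator U on H and an orthogonal projection P such that T = UP. -/

import Mathlib

/-!
`P = T*T` is the projection onto the initial space of `T`, and `1 - P` the projection onto
`K = ker T`. Pick any conjugation `J` of the Hilbert space `K` and put `V = C J (1 - P)`. Then
`V*V = 1 - P`, and `V` is `C`-symmetric because `⟪C x, V y⟫ = ⟪J q y, q x⟫` (with `q` the
orthogonal projection onto `K`) is symmetric in `x, y`. Conjugating by `C` turns `V*V = 1 - T*T`
into `VV* = 1 - TT*`, so `V` is a partial isometry from `ker T` onto `ker T* = (ran T)ᗮ` and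
`U = T + V` is a `C`-symmetric unitary with `UP = T`.
-/

noncomputable section

open ContinuousLinearMap

def IsConjugation {H : Type*} [NormedAddCommGroup H] [InnerProductSpace ℂ H]
    (C : H → H) : Prop :=
  (∀ x y, C (x + y) = C x + C y) ∧
  (∀ (a : ℂ) (x : H), C (a • x) = (starRingEnd ℂ) a • C x) ∧
  (∀ x, C (C x) = x) ∧
  (∀ x y : H, (inner ℂ (C x) (C y) : ℂ) = inner ℂ y x)

def IsPartialIsometry {H : Type*} [NormedAddCommGroup H] [InnerProductSpace ℂ H]
    [CompleteSpace H] (T : H →L[ℂ] H) : Prop :=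
  (adjoint T ∘L T) ∘L (adjoint T ∘L T) = adjoint T ∘L T

open scoped InnerProductSpace

section CStarRing

variable {A : Type*} [NormedRing A] [StarRing A] [CStarRing A] {a t v : A}

theorem mul_star_mul_eq_self_of_isIdempotentElem (h : IsIdempotentElem (star a * a)) :
    a * star a * a = a := by
  rw [← sub_eq_zero, ← CStarRing.star_mul_self_eq_zero_iff]
  have expand : star (a * star a * a - a) * (a * star a * a - a) =
      star a * a * (star a * a) * (star a * a) - 2 • (star a * a * (star a * a)) + star a * a := by
    simp only [star_sub, star_mul, star_star]
    noncomm_ring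
  rw [expand, h.eq, h.eq, two_smul]
  abel

theorem mul_star_mul_self_eq_zero_of_star_mul_self_eq_one_sub
    (ht : IsIdempotentElem (star t * t)) (hv : star v * v = 1 - star t * t) :
    v * (star t * t) = 0 := by
  have hvv : v * star v * v = v := mul_star_mul_eq_self_of_isIdempotentElem (hv ▸ ht.one_sub)
  calc v * (star t * t) = v * (1 - star v * v) := by rw [hv, sub_sub_cancel]
    _ = 0 := by rw [mul_sub, mul_one, ← mul_assoc, hvv, sub_self]

theorem add_mem_unitary_of_star_mul_self_eq_one_sub
    (ht : IsIdempotentElem (star t * t)) (hv₁ : star v * v = 1 - star t * t)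
    (hv₂ : v * star v = 1 - t * star t) : t + v ∈ unitary A := by
  have hts : star t * t * star t = star t := by
    simpa [mul_assoc] using congrArg star (mul_star_mul_eq_self_of_isIdempotentElem ht)
  have hvv : v * star v * v = v := mul_star_mul_eq_self_of_isIdempotentElem (hv₁ ▸ ht.one_sub)
  have hvt : v * star t = 0 := by
    rw [← hts, ← mul_assoc, mul_star_mul_self_eq_zero_of_star_mul_self_eq_one_sub ht hv₁,
      zero_mul]
  have htv : star t * v = 0 :=
    calc star t * v = star t * (v * star v) * v := by rw [mul_assoc, hvv]
      _ = (star t - star t * t * star t) * v := by rw [hv₂, mul_sub, mul_one, ← mul_assoc]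
      _ = 0 := by rw [hts, sub_self, zero_mul]
  have hvt' : star v * t = 0 := by simpa using congrArg star htv
  have htv' : t * star v = 0 := by simpa using congrArg star hvt
  refine Unitary.mem_iff.mpr ⟨?_, ?_⟩
  · rw [star_add, add_mul, mul_add, mul_add, htv, hvt', hv₁]; abel
  · rw [star_add, add_mul, mul_add, mul_add, htv', hvt, hv₂]; abel

end CStarRing

namespace IsConjugation

variable {H : Type*} [NormedAddCommGroup H] [InnerProductSpace ℂ H] {C : H → H}

theorem apply_apply (hC : IsConjugation C) (x : H) : C (C x) = x := hC.2.2.1 x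

theorem inner_map_map (hC : IsConjugation C) (x y : H) : ⟪C x, C y⟫_ℂ = ⟪y, x⟫_ℂ :=
  hC.2.2.2 x y

theorem inner_map_left_comm (hC : IsConjugation C) (x y : H) : ⟪C x, y⟫_ℂ = ⟪C y, x⟫_ℂ := by
  conv_lhs => rw [← hC.apply_apply y]
  exact hC.inner_map_map x (C y)

theorem norm_map (hC : IsConjugation C) (x : H) : ‖C x‖ = ‖x‖ := by
  simp only [norm_eq_sqrt_re_inner (𝕜 := ℂ), hC.inner_map_map]

def toLinearIsometry (hC : IsConjugation C) : H →ₗᵢ⋆[ℂ] H where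
  toFun := C
  map_add' := hC.1
  map_smul' := hC.2.1
  norm_map' := hC.norm_map

@[simp]
theorem coe_toLinearIsometry (hC : IsConjugation C) : ⇑hC.toLinearIsometry = C := rfl

theorem map_add (hC : IsConjugation C) (x y : H) : C (x + y) = C x + C y := hC.1 x y

theorem map_sub (hC : IsConjugation C) (x y : H) : C (x - y) = C x - C y :=
  hC.toLinearIsometry.map_sub x y

end IsConjugation

theorem exists_isConjugation (K : Type*) [NormedAddCommGroup K] [InnerProductSpace ℂ K]
    [CompleteSpace K] : ∃ J : K → K, IsConjugation J := by
  obtain ⟨w, b, -⟩ := exists_hilbertBasis ℂ K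
  refine ⟨fun x => b.repr.symm (star (b.repr x)), fun x y => ?_, fun a x => ?_, fun x => ?_,
    fun x y => ?_⟩
  · simp [star_add]
  · simp [star_smul]
  · simp
  · rw [← b.repr.inner_map_map (b.repr.symm (star (b.repr x))), b.repr.apply_symm_apply,
      ← b.repr.inner_map_map y x, lp.inner_eq_tsum, lp.inner_eq_tsum]
    congr 1
    ext i
    simp [RCLike.inner_apply, mul_comm]

section CSymmetric

variable {H : Type*} [NormedAddCommGroup H] [InnerProductSpace ℂ H] [CompleteSpace H]

def IsCSymmetric (C : H → H) (T : H →L[ℂ] H) : Prop := ∀ x, T x = C (adjoint T (C x))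

variable {C : H → H} {T V : H →L[ℂ] H}

theorem isCSymmetric_iff_inner (hC : IsConjugation C) :
    IsCSymmetric C T ↔ ∀ x y, ⟪C x, T y⟫_ℂ = ⟪C y, T x⟫_ℂ := by
  constructor
  · intro hT x y
    rw [hT y, hC.inner_map_map, adjoint_inner_left]
  · intro h x
    refine ext_inner_left ℂ fun y => ?_
    conv_rhs => rw [← hC.apply_apply y]
    rw [hC.inner_map_map, adjoint_inner_left, h, hC.apply_apply]

namespace IsCSymmetric

theorem adjoint_apply (hC : IsConjugation C) (hT : IsCSymmetric C T) (x : H) :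
    adjoint T x = C (T (C x)) := by
  rw [hT (C x), hC.apply_apply, hC.apply_apply]

theorem add (hC : IsConjugation C) (hT : IsCSymmetric C T) (hV : IsCSymmetric C V) :
    IsCSymmetric C (T + V) := fun x => by
  rw [map_add, add_apply, add_apply, hT x, hV x, hC.map_add]

theorem self_comp_adjoint_apply (hC : IsConjugation C) (hT : IsCSymmetric C T) (x : H) :
    T (adjoint T x) = C (adjoint T (T (C x))) := by
  rw [hT (adjoint T x), hT.adjoint_apply hC x, hC.apply_apply]

theorem comp_adjoint_eq_one_sub (hC : IsConjugation C) (hT : IsCSymmetric C T)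
    (hV : IsCSymmetric C V) (h : adjoint V ∘L V = 1 - adjoint T ∘L T) :
    V ∘L adjoint V = 1 - T ∘L adjoint T := by
  ext x
  have hCx := congr($h (C x))
  simp only [comp_apply, sub_apply, one_apply_eq_self] at hCx ⊢
  rw [hV.self_comp_adjoint_apply hC, hCx, hC.map_sub, hC.apply_apply,
    ← hT.self_comp_adjoint_apply hC]

end IsCSymmetric

theorem exists_isCSymmetric_adjoint_comp_self_eq_starProjection (hC : IsConjugation C)
    (K : Submodule ℂ H) [CompleteSpace K] :
    ∃ V : H →L[ℂ] H, IsCSymmetric C V ∧ adjoint V ∘L V = K.starProjection := by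
  obtain ⟨J, hJ⟩ := exists_isConjugation K
  let V : H →L[ℂ] H := hC.toLinearIsometry.toContinuousLinearMap.comp
    (K.subtypeL.comp (hJ.toLinearIsometry.toContinuousLinearMap.comp K.orthogonalProjectionOnto))
  have hV : ∀ x y, ⟪C x, V y⟫_ℂ =
      ⟪J (K.orthogonalProjectionOnto y), K.orthogonalProjectionOnto x⟫_ℂ := by
    intro x y
    simp [V, hC.inner_map_map]
  refine ⟨V, (isCSymmetric_iff_inner hC).mpr fun x y => by rw [hV, hV, hJ.inner_map_left_comm],
    ?_⟩
  ext x
  refine ext_inner_right ℂ fun y => ?_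
  have hVV : ⟪V x, V y⟫_ℂ = ⟪K.orthogonalProjectionOnto x, K.orthogonalProjectionOnto y⟫_ℂ := by
    simp only [V, comp_apply, LinearIsometry.coe_toContinuousLinearMap,
      IsConjugation.coe_toLinearIsometry, Submodule.coe_subtypeL, Submodule.subtype_apply,
      hC.inner_map_map, ← Submodule.coe_inner, hJ.inner_map_map]
  rw [comp_apply, adjoint_inner_left, hVV, Submodule.inner_orthogonalProjectionOnto_eq_of_mem_left,
    Submodule.starProjection_apply]

theorem IsStarProjection.exists_isCSymmetric_adjoint_comp_self_eq (hC : IsConjugation C)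
    {Q : H →L[ℂ] H} (hQ : IsStarProjection Q) :
    ∃ V : H →L[ℂ] H, IsCSymmetric C V ∧ adjoint V ∘L V = Q := by
  have : CompleteSpace Q.range := hQ.isIdempotentElem.isClosed_range.completeSpace_coe
  obtain ⟨_, hQK⟩ := isStarProjection_iff_eq_starProjection_range.mp hQ
  rw [hQK]
  exact exists_isCSymmetric_adjoint_comp_self_eq_starProjection hC _

end CSymmetric

theorem CSymmetric_partialIsometry_eq_unitary_mul_projection
    {H : Type*} [NormedAddCommGroup H] [InnerProductSpace ℂ H] [CompleteSpace H]
    (C : H → H) (hC : IsConjugation C)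
    (T : H →L[ℂ] H) (hT : IsPartialIsometry T)
    (hTC : ∀ x, T x = C (adjoint T (C x))) :
    ∃ (U P : H →L[ℂ] H),
      (adjoint U ∘L U = 1) ∧ (U ∘L adjoint U = 1) ∧
      (∀ x, U x = C (adjoint U (C x))) ∧
      (adjoint P = P) ∧ (P ∘L P = P) ∧
      T = U ∘L P := by
  have hP : IsStarProjection (star T * T) := ⟨hT, .star_mul_self T⟩
  obtain ⟨V, hVC, hVV⟩ := hP.one_sub.exists_isCSymmetric_adjoint_comp_self_eq hC
  have hVV' : V ∘L adjoint V = 1 - T ∘L adjoint T :=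
    IsCSymmetric.comp_adjoint_eq_one_sub hC hTC hVC hVV
  have hU : T + V ∈ unitary (H →L[ℂ] H) :=
    add_mem_unitary_of_star_mul_self_eq_one_sub hP.1 hVV hVV'
  refine ⟨T + V, star T * T, hU.1, hU.2, IsCSymmetric.add hC hTC hVC, hP.2, hP.1, ?_⟩
  change T = (T + V) * (star T * T)
  rw [add_mul, ← mul_assoc, mul_star_mul_eq_self_of_isIdempotentElem hP.1,
    mul_star_mul_self_eq_zero_of_star_mul_self_eq_one_sub hP.1 hVV, add_zero]
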